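/- Let m = x_1⋯x_n be a graded monomial in n variables. Then m is a graded monomial identity of BT(n−1,1;F) if and only if deg(x_i) ≠ 0 in Z_n for every i ∈ {1,…,n} and Σ_{t=r}^{s} deg(x_t) ≠ 0 in Z_n for all 1 ≤ r < s ≤ n−1 (equivalently, no submonomial of x_1⋯x_{n−1} has degree 0). -/

import Mathlib

open scoped BigOperators

/-- The free associative algebra on variables indexed by pairs (degree in `ZMod n`, index). -/
abbrev FA (F : Type*) [Field F] (n : ℕ) := FreeAlgebra F (ZMod n × ℕ)

/-- The graded monomial corresponding to a word of variables. -/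
def mono (F : Type*) [Field F] (n : ℕ) (w : List (ZMod n × ℕ)) : FA F n :=
  (w.map fun p => FreeAlgebra.ι F p).prod

/-- The homogeneous component of degree `g` of the free graded algebra. -/
def homComp (F : Type*) [Field F] (n : ℕ) (g : ZMod n) : Submodule F (FA F n) :=
  Submodule.span F
    {x | ∃ w : List (ZMod n × ℕ), (w.map Prod.fst).sum = g ∧ x = mono F n w}

/-- A `T_{Z_n}`-ideal: invariant under all graded endomorphisms. -/
def IsTIdeal (F : Type*) [Field F] (n : ℕ) (I : Ideal (FA F n)) : Prop :=
  ∀ φ : FA F n →ₐ[F] FA F n,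
    (∀ g : ZMod n, ∀ x ∈ homComp F n g, φ x ∈ homComp F n g) →
    ∀ x ∈ I, φ x ∈ I

/-- The `T_{Z_n}`-ideal generated by a set of graded polynomials. -/
def TIdealGen (F : Type*) [Field F] (n : ℕ) (S : Set (FA F n)) : Ideal (FA F n) :=
  sInf {I : Ideal (FA F n) | IsTIdeal F n I ∧ S ⊆ I}

/-- The Vasilovsky polynomials. -/
def vasSet (F : Type*) [Field F] (n : ℕ) : Set (FA F n) :=
  {f | ∃ r s : ℕ,
      f = FreeAlgebra.ι F ((0 : ZMod n), r) * FreeAlgebra.ι F ((0 : ZMod n), s)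
        - FreeAlgebra.ι F ((0 : ZMod n), s) * FreeAlgebra.ι F ((0 : ZMod n), r)} ∪
  {f | ∃ (g : ZMod n) (r s t : ℕ),
      f = FreeAlgebra.ι F (g, r) * FreeAlgebra.ι F (-g, s) * FreeAlgebra.ι F (g, t)
        - FreeAlgebra.ι F (g, t) * FreeAlgebra.ι F (-g, s) * FreeAlgebra.ι F (g, r)}

/-- `I_n`, the `T_{Z_n}`-ideal generated by the Vasilovsky identities. -/
def In' (F : Type*) [Field F] (n : ℕ) : Ideal (FA F n) := TIdealGen F n (vasSet F n)

/-- `f` is a graded identity of the algebra `B` with `ZMod n`-grading `gr`. -/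
def IsGIdentity (F : Type*) [Field F] (n : ℕ) {B : Type*} [Ring B] [Algebra F B]
    (gr : ZMod n → Set B) (f : FA F n) : Prop :=
  ∀ σ : ZMod n × ℕ → B, (∀ p : ZMod n × ℕ, σ p ∈ gr p.1) →
    FreeAlgebra.lift F σ f = 0

/-- The ideal of graded identities. -/
def TIdOf (F : Type*) [Field F] (n : ℕ) {B : Type*} [Ring B] [Algebra F B]
    (gr : ZMod n → Set B) : Ideal (FA F n) where
  carrier := {f | IsGIdentity F n gr f}
  zero_mem' := fun σ _ => map_zero _
  add_mem' := fun ha hb σ hσ => by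
    rw [map_add, ha σ hσ, hb σ hσ, add_zero]
  smul_mem' := fun c a ha σ hσ => by
    rw [smul_eq_mul, map_mul, ha σ hσ, mul_zero]

/-- The Di Vincenzo–Vasilovsky grading of the matrix algebra. -/
def matGr (F : Type*) [Field F] (n : ℕ) (t : ZMod n) :
    Set (Matrix (ZMod n) (ZMod n) F) :=
  {A | ∀ i j : ZMod n, A i j ≠ 0 → j - i = t}

/-- The index of the block (of sizes `d 0, d 1, …`) containing row/column `i`. -/
noncomputable def blockOf (d : ℕ → ℕ) (i : ℕ) : ℕ :=
  sInf {k | i < ∑ j ∈ Finset.range (k + 1), d j}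

/-- The grading of the block-triangular algebra `BT(d₀,…,d_{m-1};F)`:
homogeneous component of degree `t`. -/
def BTgr (F : Type*) [Field F] (n : ℕ) (d : ℕ → ℕ) (t : ZMod n) :
    Set (Matrix (ZMod n) (ZMod n) F) :=
  {A | ∀ i j : ZMod n, A i j ≠ 0 → j - i = t ∧ blockOf d i.val ≤ blockOf d j.val}

/-- Number of zero rows of a matrix. -/
noncomputable def fRows {R : Type*} [Zero R] {n : ℕ} (A : Matrix (ZMod n) (ZMod n) R) : ℕ :=
  Nat.card {i : ZMod n // A i = 0}

/-- Number of falls between `A` and `B`. -/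
noncomputable def falls {R : Type*} [CommRing R] {n : ℕ} [NeZero n]
    (A B : Matrix (ZMod n) (ZMod n) R) : ℕ :=
  fRows (A * B) - fRows A

/-- The generic matrix `G_r^{(g)}` of `BT(d;F)`. -/
noncomputable def genBT (F : Type*) [Field F] (n : ℕ) (d : ℕ → ℕ) (g : ZMod n) (r : ℕ) :
    Matrix (ZMod n) (ZMod n) (MvPolynomial ((ZMod n × ZMod n) × ℕ) F) :=
  Matrix.of fun p q =>
    if q - p = g ∧ blockOf d p.val ≤ blockOf d q.val
    then MvPolynomial.X ((p, q), r) else 0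

/-- The grading of `BT(n-1,1;F)`: homogeneous component of degree `t`. -/
def BT1gr (F : Type*) [Field F] (n : ℕ) (t : ZMod n) :
    Set (Matrix (ZMod n) (ZMod n) F) :=
  {A | (∀ i j : ZMod n, A i j ≠ 0 → j - i = t) ∧
       ∀ j : ZMod n, j.val < n - 1 → A ((n - 1 : ℕ) : ZMod n) j = 0}

/-- The matrix `Σ_{i=1}^{n-1} e_{i,i+g}` used in the canonical substitution. -/
def subMat (F : Type*) [Field F] (n : ℕ) (g : ZMod n) :
    Matrix (ZMod n) (ZMod n) F :=
  Matrix.of fun p q => if p ≠ ((n - 1 : ℕ) : ZMod n) ∧ q = p + g then 1 else 0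

section AuxVas

variable (F : Type*) [Field F] (n : ℕ)

lemma lift_mono' {B : Type*} [Ring B] [Algebra F B] (σ : ZMod n × ℕ → B)
    (w : List (ZMod n × ℕ)) :
    FreeAlgebra.lift F σ (mono F n w) = (w.map σ).prod := by
  unfold mono
  rw [map_list_prod, List.map_map]
  congr 1
  simp [Function.comp]

lemma one_mem_BT1gr' [NeZero n] (hn : 2 ≤ n) :
    (1 : Matrix (ZMod n) (ZMod n) F) ∈ BT1gr F n 0 := by
  constructor
  · intro i j h
    by_cases hij : i = j
    · simp [hij]
    · exact absurd (Matrix.one_apply_ne hij) h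
  · intro j hj
    apply Matrix.one_apply_ne
    intro hc
    have : ((((n - 1 : ℕ) : ZMod n)).val) = n - 1 := ZMod.val_natCast_of_lt (by omega)
    rw [hc] at this
    omega

lemma subMat_mem_BT1gr' [NeZero n] (g : ZMod n) :
    subMat F n g ∈ BT1gr F n g := by
  constructor
  · intro i j h
    unfold subMat at h
    rw [Matrix.of_apply] at h
    split_ifs at h with hcond
    · rw [hcond.2]; ring
    · exact absurd rfl h
  · intro j _
    unfold subMat
    rw [Matrix.of_apply, if_neg]
    rintro ⟨h1, -⟩
    exact h1 rfl

/-- Vanishing lemma: entries of products of homogeneous matrices with nonzero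
degrees are supported on paths avoiding row `n-1`. -/
lemma entry_vanish' [NeZero n] (g : ℕ → ZMod n) (A : ℕ → Matrix (ZMod n) (ZMod n) F)
    (i : ZMod n) :
    ∀ m : ℕ, (∀ k < m, A k ∈ BT1gr F n (g k)) → (∀ k < m, g k ≠ 0) →
    ∀ j : ZMod n, (((List.range m).map A).prod) i j ≠ 0 →
    j = i + ∑ t ∈ Finset.range m, g t ∧
      ∀ k < m, i + ∑ t ∈ Finset.range k, g t ≠ ((n - 1 : ℕ) : ZMod n) := by
  intro m
  induction m with
  | zero =>
    intro _ _ j h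
    simp only [List.range_zero, List.map_nil, List.prod_nil, Matrix.one_apply, ne_eq,
      ite_eq_right_iff, not_forall] at h
    exact ⟨by simp [h.1.symm], by omega⟩
  | succ m ih =>
    intro hA hg j h
    rw [List.range_succ, List.map_append, List.prod_append] at h
    simp only [List.map_cons, List.map_nil, List.prod_cons, List.prod_nil, mul_one] at h
    rw [Matrix.mul_apply] at h
    obtain ⟨x, -, hx⟩ := Finset.exists_ne_zero_of_sum_ne_zero h
    have h1 : (((List.range m).map A).prod) i x ≠ 0 := left_ne_zero_of_mul hx
    have h2 : A m x j ≠ 0 := right_ne_zero_of_mul hx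
    obtain ⟨hxe, hcond⟩ := ih (fun k hk => hA k (by omega)) (fun k hk => hg k (by omega)) x h1
    have hAm := hA m (Nat.lt_succ_self m)
    have hdj : j - x = g m := hAm.1 x j h2
    have hxne : x ≠ ((n - 1 : ℕ) : ZMod n) := by
      intro hxc
      -- row n-1 of A m is zero
      rcases lt_or_ge j.val (n - 1) with hjv | hjv
      · exact h2 (hxc ▸ hAm.2 j hjv)
      · have hjvn : j.val = n - 1 := by have := ZMod.val_lt j; omega
        have hj : j = ((n - 1 : ℕ) : ZMod n) := by
          rw [← ZMod.natCast_zmod_val j, hjvn]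
        rw [hj, hxc, sub_self] at hdj
        exact hg m (Nat.lt_succ_self m) hdj.symm
    constructor
    · rw [Finset.sum_range_succ, ← add_assoc, ← hxe, ← hdj]; ring
    · intro k hk
      rcases Nat.lt_or_ge k m with hkm | hkm
      · exact hcond k hkm
      · have : k = m := by omega
        rw [this, ← hxe]
        exact hxne

/-- Explicit computation of the row `i₀` of the product of the canonical
substitution matrices. -/
lemma entry_explicit' [NeZero n] (g : ℕ → ZMod n) (i₀ : ZMod n) :
    ∀ m : ℕ,
    (∀ k < m, g k ≠ 0 → i₀ + ∑ t ∈ Finset.range k, g t ≠ ((n - 1 : ℕ) : ZMod n)) →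
    ∀ j : ZMod n,
      (((List.range m).map fun k =>
          if g k = 0 then (1 : Matrix (ZMod n) (ZMod n) F) else subMat F n (g k)).prod) i₀ j
        = if j = i₀ + ∑ t ∈ Finset.range m, g t then 1 else 0 := by
  intro m
  induction m with
  | zero =>
    intro _ j
    simp [Matrix.one_apply, eq_comm]
  | succ m ih =>
    intro hok j
    rw [List.range_succ, List.map_append, List.prod_append]
    simp only [List.map_cons, List.map_nil, List.prod_cons, List.prod_nil, mul_one]
    rw [Matrix.mul_apply]
    have ihm := ih (fun k hk => hok k (by omega))
    simp only [ihm]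
    have hsum : ∑ x : ZMod n,
        (if x = i₀ + ∑ t ∈ Finset.range m, g t then (1:F) else 0) *
          (if g m = 0 then (1 : Matrix (ZMod n) (ZMod n) F) else subMat F n (g m)) x j
        = (if g m = 0 then (1 : Matrix (ZMod n) (ZMod n) F) else subMat F n (g m))
            (i₀ + ∑ t ∈ Finset.range m, g t) j := by
      simp [ite_mul, Finset.sum_ite_eq]
    rw [hsum]
    by_cases hgm : g m = 0
    · rw [if_pos hgm, Finset.sum_range_succ, hgm, add_zero, Matrix.one_apply]
      exact if_congr eq_comm rfl rfl
    · rw [if_neg hgm]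
      unfold subMat
      rw [Matrix.of_apply, Finset.sum_range_succ, ← add_assoc]
      have hne := hok m (Nat.lt_succ_self m) hgm
      simp [hne]

lemma exists_avoid' (n : ℕ) [NeZero n] (f : ℕ → ZMod n) (k₀ : ℕ) (hk₀ : k₀ < n) :
    ∃ x : ZMod n, ∀ k ∈ (Finset.range n).erase k₀, f k ≠ x := by
  have h0 := Finset.card_image_le (s := (Finset.range n).erase k₀) (f := f)
  rw [Finset.card_erase_of_mem (Finset.mem_range.2 hk₀), Finset.card_range] at h0
  have h1 : (((Finset.range n).erase k₀).image f).card < Fintype.card (ZMod n) := by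
    rw [ZMod.card]; omega
  have hne : (((((Finset.range n).erase k₀).image f))ᶜ).Nonempty := by
    rw [← Finset.card_pos, Finset.card_compl]; omega
  obtain ⟨x, hx⟩ := hne
  refine ⟨x, fun k hk hfk => ?_⟩
  exact (Finset.mem_compl.1 hx) (hfk ▸ Finset.mem_image_of_mem f hk)

end AuxVas

theorem degree_n_monomial_identity_iff'
    (F : Type*) [Field F] [CharZero F] (n : ℕ) (hn : 2 ≤ n) [NeZero n]
    (v : ℕ → ZMod n × ℕ) (hv : ((List.range n).map v).Nodup) :
    (∀ σ : ZMod n × ℕ → Matrix (ZMod n) (ZMod n) F,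
      (∀ p : ZMod n × ℕ, σ p ∈ BT1gr F n p.1) →
      FreeAlgebra.lift F σ (mono F n ((List.range n).map v)) = 0) ↔
      ((∀ i < n, (v i).1 ≠ 0) ∧
        ∀ a b : ℕ, a < b → b < n - 1 → (∑ t ∈ Finset.Icc a b, (v t).1) ≠ 0) := by
  constructor
  · -- identity ⇒ conditions
    intro hId
    by_contra hfail
    have hσ : ∀ p : ZMod n × ℕ,
        (fun p : ZMod n × ℕ => if p.1 = 0 then (1 : Matrix (ZMod n) (ZMod n) F)
          else subMat F n p.1) p ∈ BT1gr F n p.1 := by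
      intro p
      by_cases h : p.1 = 0
      · simp only [if_pos h, h]
        exact one_mem_BT1gr' F n hn
      · simp only [if_neg h]
        exact subMat_mem_BT1gr' F n p.1
    obtain ⟨k₀, hk₀n, hrep⟩ : ∃ k₀ < n, ∀ k < n, (v k).1 ≠ 0 → k = k₀ →
        ∃ a < n, a ≠ k₀ ∧
          (∑ t ∈ Finset.range a, (v t).1) = ∑ t ∈ Finset.range k₀, (v t).1 := by
      by_cases hall : ∀ i < n, (v i).1 ≠ 0
      · push_neg at hfail
        obtain ⟨a, b, hab, hbn, hsum⟩ := hfail hall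
        refine ⟨b + 1, by omega, fun k hk hgk hkk₀ => ⟨a, by omega, by omega, ?_⟩⟩
        have h1 : ∑ t ∈ Finset.Ico a (b+1), (v t).1 = 0 := by
          rw [Finset.Ico_add_one_right_eq_Icc]; exact hsum
        have h2 := Finset.sum_Ico_eq_sub (fun t => (v t).1) (show a ≤ b+1 by omega)
        rw [h1] at h2
        exact (sub_eq_zero.1 h2.symm).symm
      · push_neg at hall
        obtain ⟨i, hin, hgi⟩ := hall
        exact ⟨i, hin, fun k hk hgk hkk₀ =>
          absurd (show (v k).1 = 0 by rw [hkk₀]; exact hgi) hgk⟩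
    obtain ⟨i₀, hi₀'⟩ := exists_avoid' n
      (fun k => ((n-1:ℕ) : ZMod n) - ∑ t ∈ Finset.range k, (v t).1) k₀ hk₀n
    have hi₀ : ∀ k < n, (fun k => (v k).1) k ≠ 0 →
        i₀ + ∑ t ∈ Finset.range k, (v t).1 ≠ ((n-1:ℕ) : ZMod n) := by
      intro k hk hgk hcon
      have hfki : ((n-1:ℕ) : ZMod n) - ∑ t ∈ Finset.range k, (v t).1 = i₀ := by
        rw [← hcon]; ring
      by_cases hkk₀ : k = k₀
      · obtain ⟨a, han, hak₀, hSa⟩ := hrep k hk hgk hkk₀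
        refine hi₀' a (Finset.mem_erase.2 ⟨hak₀, Finset.mem_range.2 han⟩) ?_
        show ((n-1:ℕ) : ZMod n) - ∑ t ∈ Finset.range a, (v t).1 = i₀
        rw [hSa, ← hkk₀, hfki]
      · exact hi₀' k (Finset.mem_erase.2 ⟨hkk₀, Finset.mem_range.2 hk⟩) hfki
    have h0 := hId _ hσ
    rw [lift_mono' F n _, List.map_map] at h0
    have hrow := entry_explicit' F n (fun k => (v k).1) i₀ n hi₀
      (i₀ + ∑ t ∈ Finset.range n, (v t).1)
    rw [show ((List.range n).map fun k =>
          if (v k).1 = 0 then (1 : Matrix (ZMod n) (ZMod n) F) else subMat F n (v k).1)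
        = (List.range n).map ((fun p : ZMod n × ℕ =>
            if p.1 = 0 then (1 : Matrix (ZMod n) (ZMod n) F) else subMat F n p.1) ∘ v)
        from rfl, h0] at hrow
    simp at hrow
  · -- conditions ⇒ identity
    rintro ⟨h1, h2⟩ σ hσ
    rw [lift_mono' F n _, List.map_map]
    ext i j
    rw [Matrix.zero_apply]
    by_contra hne
    obtain ⟨-, hcond⟩ := entry_vanish' F n (fun k => (v k).1) (σ ∘ v) i n
      (fun k _ => hσ (v k)) (fun k hk => h1 k hk) j hne
    have hmaps : ∀ k ∈ Finset.range n,
        (fun k => i + ∑ t ∈ Finset.range k, (v t).1) k ∈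
          (Finset.univ.erase (((n-1:ℕ) : ZMod n))) := fun k hk =>
      Finset.mem_erase.2 ⟨hcond k (Finset.mem_range.1 hk), Finset.mem_univ _⟩
    have hcard : (Finset.univ.erase (((n-1:ℕ) : ZMod n))).card < (Finset.range n).card := by
      rw [Finset.card_erase_of_mem (Finset.mem_univ _), Finset.card_univ, ZMod.card,
        Finset.card_range]
      omega
    obtain ⟨k, hk, k', hk', hne', heq⟩ :=
      Finset.exists_ne_map_eq_of_card_lt_of_maps_to hcard hmaps
    have hS : (∑ t ∈ Finset.range k, (v t).1) = ∑ t ∈ Finset.range k', (v t).1 :=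
      add_left_cancel heq
    have key : ∀ p q : ℕ, p < q → q < n →
        (∑ t ∈ Finset.range p, (v t).1) = (∑ t ∈ Finset.range q, (v t).1) → False := by
      intro p q hpq hqn hSpq
      have hsum0 : ∑ t ∈ Finset.Icc p (q-1), (v t).1 = 0 := by
        have ha := Finset.sum_Ico_eq_sub (fun t => (v t).1) (le_of_lt hpq)
        have hb : Finset.Ico p q = Finset.Icc p (q-1) := by
          rw [← Finset.Ico_add_one_right_eq_Icc]
          congr 1
          omega
        rw [← hb, ha, hSpq, sub_self]
      rcases Nat.lt_or_ge p (q-1) with hlt | hge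
      · exact h2 p (q-1) hlt (by omega) hsum0
      · have hq : q - 1 = p := by omega
        rw [hq, Finset.Icc_self, Finset.sum_singleton] at hsum0
        exact h1 p (by omega) hsum0
    rcases hne'.lt_or_gt with hlt | hlt
    · exact key k k' hlt (Finset.mem_range.1 hk') hS
    · exact key k' k hlt (Finset.mem_range.1 hk) hS.symm

/-- a graded monomial `m = x_1⋯x_n` in `n` (pairwise distinct)
variables, with `deg x_t = (v (t-1)).1`, is a graded monomial identity of
`BT(n-1,1;F)` if and only if `deg x_i ≠ 0` for every `i` and no (consecutive)
submonomial of `x_1⋯x_{n-1}` of length at least two has degree `0`. -/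
theorem degree_n_monomial_identity_iff
    (F : Type*) [Field F] [CharZero F] (n : ℕ) (hn : 2 ≤ n) [NeZero n]
    (v : ℕ → ZMod n × ℕ) (hv : ((List.range n).map v).Nodup) :
    IsGIdentity F n (BT1gr F n) (mono F n ((List.range n).map v)) ↔
      ((∀ i < n, (v i).1 ≠ 0) ∧
        ∀ a b : ℕ, a < b → b < n - 1 → (∑ t ∈ Finset.Icc a b, (v t).1) ≠ 0) := by
  exact degree_n_monomial_identity_iff' F n hn v hv
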